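/- Let (w_n)_{n≥1} be positive reals with ∑_{n≥1} w_n = 1 and let (a_n)_{n≥1} be a strictly increasing sequence of reals. For each k set b_k := inf_{n≠k} |a_k - a_n - 1|, and assume that b_k → ∞ as k → ∞ and that for every t > 0 there exists k₀ ∈ ℕ such that w_k·exp(-1/(2t)) > b_k·exp(-b_k²/(2t)) for all k ≥ k₀. Then for every t > 0 the function F_t(x) = ∑_{n≥1} w_n·exp(-(x - a_n)²/(2t)) satisfies F_t'(a_k - 1) > 0 for all sufficiently large k; in particular, F_t is not unimodal for any t > 0. -/

import Mathlib

open MeasureTheory Real Set Filter Topology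

/-- A function `f : ℝ → ℝ` is unimodal if there is a mode `a` such that `f` is
nondecreasing on `(-∞, a]` and nonincreasing on `[a, ∞)`. -/
def Unimodal (f : ℝ → ℝ) : Prop :=
  ∃ a : ℝ, MonotoneOn f (Set.Iic a) ∧ AntitoneOn f (Set.Ici a)

/-!
The derivative of `F_t` at `x` is `t⁻¹ ∑ wₙ (aₙ - x) exp (-(x - aₙ)² / 2t)`. At `x = a_k - 1` the
`k`-th term is `w_k exp (-1 / 2t)`, while every other centre lies at distance at least `b_k` from
`x`. Since `s ↦ s exp (-s² / 2t)` decreases on `[√t, ∞)` and `b_k → ∞`, each other term is at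
least `-wₙ b_k exp (-b_k² / 2t)`, so the tail is at least `-b_k exp (-b_k² / 2t)`, which the
`k`-th term beats by hypothesis. As `a_k → ∞`, `F_t` increases at arbitrarily large points, which
no unimodal function does.
-/
lemma antitoneOn_mul_exp_neg_sq_div {t : ℝ} (ht : 0 < t) :
    AntitoneOn (fun s => s * exp (-s ^ 2 / (2 * t))) (Ici √t) := by
  intro c hc s hs hcs
  simp only [mem_Ici] at hc hs
  have hc0 : 0 ≤ c := (sqrt_nonneg t).trans hc
  have htc : t ≤ c ^ 2 := by simpa [sq_sqrt ht.le] using pow_le_pow_left₀ (sqrt_nonneg t) hc 2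
  -- `c * exp ((s² - c²) / 2t) ≥ c * (1 + (s² - c²) / 2t) ≥ s`, the last step since `c (s + c) ≥ 2t`
  have hgrowth : s ≤ c * exp ((s ^ 2 - c ^ 2) / (2 * t)) := by
    have hlin : s ≤ c * ((s ^ 2 - c ^ 2) / (2 * t) + 1) := by
      have : 0 ≤ (s - c) * (c * (s + c) - 2 * t) / (2 * t) := by
        apply div_nonneg _ (by positivity)
        exact mul_nonneg (by linarith) (by nlinarith)
      rw [← sub_nonneg]
      convert this using 1
      field_simp
      ring
    exact hlin.trans (mul_le_mul_of_nonneg_left (add_one_le_exp _) hc0)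
  calc s * exp (-s ^ 2 / (2 * t))
      ≤ c * exp ((s ^ 2 - c ^ 2) / (2 * t)) * exp (-s ^ 2 / (2 * t)) := by gcongr
    _ = c * exp (-c ^ 2 / (2 * t)) := by rw [mul_assoc, ← exp_add]; ring_nf

lemma exp_neg_sq_div_le_one {t : ℝ} (ht : 0 ≤ t) (s : ℝ) : exp (-s ^ 2 / (2 * t)) ≤ 1 :=
  exp_le_one_iff.2 (div_nonpos_of_nonpos_of_nonneg (neg_nonpos.2 (sq_nonneg s)) (by positivity))

lemma abs_mul_exp_neg_sq_div_le_sqrt {t : ℝ} (ht : 0 < t) (s : ℝ) :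
    |s| * exp (-s ^ 2 / (2 * t)) ≤ √t := by
  rcases le_total |s| √t with hs | hs
  · exact (mul_le_of_le_one_right (abs_nonneg s) (exp_neg_sq_div_le_one ht.le s)).trans hs
  · calc |s| * exp (-s ^ 2 / (2 * t)) ≤ √t * exp (-√t ^ 2 / (2 * t)) := by
          simpa only [sq_abs] using antitoneOn_mul_exp_neg_sq_div ht (le_refl √t) hs hs
      _ ≤ √t := mul_le_of_le_one_right (sqrt_nonneg t) (exp_neg_sq_div_le_one ht.le _)

lemma neg_mul_exp_neg_sq_div_le {t β s : ℝ} (ht : 0 < t) (hβ : √t ≤ β) (hs : β ≤ |s|) :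
    -(β * exp (-β ^ 2 / (2 * t))) ≤ s * exp (-s ^ 2 / (2 * t)) := by
  have hmono := antitoneOn_mul_exp_neg_sq_div ht hβ (hβ.trans hs) hs
  simp only [sq_abs] at hmono
  calc -(β * exp (-β ^ 2 / (2 * t))) ≤ -|s| * exp (-s ^ 2 / (2 * t)) := by linarith
    _ ≤ s * exp (-s ^ 2 / (2 * t)) := by gcongr; exact neg_abs_le s

lemma hasDerivAt_exp_neg_sq_div (c t x : ℝ) :
    HasDerivAt (fun x => exp (-(x - c) ^ 2 / (2 * t)))
      ((c - x) * exp (-(x - c) ^ 2 / (2 * t)) / t) x := by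
  have h : HasDerivAt (fun x => -(x - c) ^ 2 / (2 * t)) ((c - x) / t) x := by
    refine ((((hasDerivAt_id' x).sub_const c).fun_pow 2).fun_neg.div_const (2 * t)).congr_deriv ?_
    push_cast
    ring
  convert h.exp using 1
  ring

lemma abs_sub_mul_exp_neg_sq_div_le_sqrt {t : ℝ} (ht : 0 < t) (c x : ℝ) :
    |(c - x) * exp (-(x - c) ^ 2 / (2 * t))| ≤ √t := by
  rw [sub_sq_comm, abs_mul, abs_of_pos (exp_pos _), ← sq_abs]
  simpa only [sq_abs] using abs_mul_exp_neg_sq_div_le_sqrt ht (c - x)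

noncomputable def gaussianMixture (w a : ℕ → ℝ) (t x : ℝ) : ℝ :=
  ∑' n, w n * exp (-(x - a n) ^ 2 / (2 * t))

lemma summable_mul_sub_mul_exp {w : ℕ → ℝ} (hw : Summable w) (a : ℕ → ℝ) {t : ℝ} (ht : 0 < t)
    (x : ℝ) : Summable fun n => w n * ((a n - x) * exp (-(x - a n) ^ 2 / (2 * t))) :=
  (hw.norm.mul_right √t).of_norm_bounded fun n => by
    rw [norm_mul]
    exact mul_le_mul_of_nonneg_left (abs_sub_mul_exp_neg_sq_div_le_sqrt ht (a n) x) (norm_nonneg _)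

lemma hasDerivAt_gaussianMixture {w : ℕ → ℝ} (hw : Summable w) (a : ℕ → ℝ) {t : ℝ} (ht : 0 < t)
    (x : ℝ) : HasDerivAt (gaussianMixture w a t)
      ((∑' n, w n * ((a n - x) * exp (-(x - a n) ^ 2 / (2 * t)))) / t) x := by
  have hbound : ∀ n y, ‖w n * ((a n - y) * exp (-(y - a n) ^ 2 / (2 * t)) / t)‖ ≤
      ‖w n‖ * √t / t := fun n y => by
    rw [norm_mul, norm_div, Real.norm_of_nonneg ht.le, mul_div_assoc]
    gcongr
    exact abs_sub_mul_exp_neg_sq_div_le_sqrt ht (a n) y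
  have hsummable : Summable fun n => w n * exp (-(0 - a n) ^ 2 / (2 * t)) :=
    hw.norm.of_norm_bounded fun n => by
      rw [norm_mul, norm_of_nonneg (exp_pos _).le]
      exact mul_le_of_le_one_right (norm_nonneg _) (exp_neg_sq_div_le_one ht.le _)
  rw [← tsum_div_const]
  have := hasDerivAt_tsum ((hw.norm.mul_right √t).div_const t)
    (fun n y => (hasDerivAt_exp_neg_sq_div (a n) t y).const_mul (w n)) hbound hsummable x
  simp only [mul_div_assoc] at this ⊢
  exact this

lemma tsum_mul_sub_mul_exp_pos {w a : ℕ → ℝ} (hw0 : ∀ n, 0 ≤ w n) (hw : Summable w)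
    {t β x : ℝ} (ht : 0 < t) (k : ℕ) (hβ : √t ≤ β) (hgap : ∀ n ≠ k, β ≤ |a n - x|)
    (hdom : (∑' n, w n) * (β * exp (-β ^ 2 / (2 * t))) <
      w k * ((a k - x) * exp (-(x - a k) ^ 2 / (2 * t)))) :
    0 < ∑' n, w n * ((a n - x) * exp (-(x - a n) ^ 2 / (2 * t))) := by
  set g := fun n => w n * ((a n - x) * exp (-(x - a n) ^ 2 / (2 * t)))
  have hg : Summable g := summable_mul_sub_mul_exp hw a ht x
  have htail : -((∑' n, w n) * (β * exp (-β ^ 2 / (2 * t)))) ≤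
      ∑' n, if n = k then 0 else g n := by
    rw [← tsum_mul_right, ← tsum_neg]
    refine Summable.tsum_le_tsum (fun n => ?_) (hw.mul_right _).neg
      ((hg.update k 0).congr fun n => Function.update_apply g k 0 n)
    split_ifs with hn
    · have hβ0 : 0 ≤ β := (sqrt_nonneg t).trans hβ
      exact neg_nonpos.2 (mul_nonneg (hw0 n) (mul_nonneg hβ0 (exp_pos _).le))
    · dsimp only [g]
      rw [neg_mul_eq_mul_neg, sub_sq_comm]
      exact mul_le_mul_of_nonneg_left (neg_mul_exp_neg_sq_div_le ht hβ (hgap n hn)) (hw0 n)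
  rw [hg.tsum_eq_add_tsum_ite k]
  linarith

lemma not_unimodal_of_frequently_deriv_pos {f : ℝ → ℝ} (h : ∃ᶠ x in atTop, 0 < deriv f x) :
    ¬ Unimodal f := by
  rintro ⟨m, -, hf⟩
  obtain ⟨x, hx, hmx⟩ := (h.and_eventually (eventually_gt_atTop m)).exists
  have := hf.derivWithin_nonpos (x := x)
  rw [derivWithin_of_mem_nhds (Ici_mem_nhds hmx)] at this
  linarith

theorem discrete_gaussian_mixture_never_unimodal
    (w a b : ℕ → ℝ) (hw : ∀ n, 0 < w n) (hsum : ∑' n, w n = 1)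
    (ha : StrictMono a)
    (hb : ∀ k, b k = sInf {r : ℝ | ∃ n, n ≠ k ∧ r = |a k - a n - 1|})
    (hbtop : Tendsto b atTop atTop)
    (hcond : ∀ t : ℝ, 0 < t → ∃ k₀ : ℕ, ∀ k, k₀ ≤ k →
      b k * Real.exp (-(b k) ^ 2 / (2 * t)) < w k * Real.exp (-1 / (2 * t))) :
    ∀ t : ℝ, 0 < t →
      (∀ᶠ k in atTop,
        0 < deriv (fun x : ℝ => ∑' n, w n * Real.exp (-(x - a n) ^ 2 / (2 * t))) (a k - 1)) ∧
      ¬ Unimodal (fun x : ℝ => ∑' n, w n * Real.exp (-(x - a n) ^ 2 / (2 * t))) := by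
  have hw_summable : Summable w := by
    by_contra h
    simp [tsum_eq_zero_of_not_summable h] at hsum
  have hgap : ∀ k n, n ≠ k → b k ≤ |a k - a n - 1| := fun k n hn =>
    hb k ▸ csInf_le ⟨0, by rintro _ ⟨m, -, rfl⟩; exact abs_nonneg _⟩ ⟨n, hn, rfl⟩
  have ha_top : Tendsto (fun k => a k - 1) atTop atTop := by
    refine tendsto_atTop_mono' atTop ?_ (tendsto_atTop_add_const_right atTop (a 0 - 2) hbtop)
    filter_upwards [eventually_gt_atTop 0] with k hk
    have h0k := ha hk
    have : |a k - a 0 - 1| ≤ a k - a 0 + 1 := abs_le.2 ⟨by linarith, by linarith⟩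
    linarith [hgap k 0 hk.ne]
  intro t ht
  have hpos : ∀ᶠ k in atTop, 0 < deriv (gaussianMixture w a t) (a k - 1) := by
    obtain ⟨k₀, hk₀⟩ := hcond t ht
    filter_upwards [eventually_ge_atTop k₀, hbtop.eventually_ge_atTop √t] with k hk hbk
    rw [(hasDerivAt_gaussianMixture hw_summable a ht _).deriv]
    refine div_pos (tsum_mul_sub_mul_exp_pos (fun n => (hw n).le) hw_summable ht k hbk
      (fun n hn => ?_) ?_) ht
    · rw [abs_sub_comm, show a k - 1 - a n = a k - a n - 1 by ring]
      exact hgap k n hn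
    · simpa [hsum] using hk₀ k hk
  exact ⟨hpos, not_unimodal_of_frequently_deriv_pos (ha_top.frequently hpos.frequently)⟩
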